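/- arXiv:2206.10860 — 2 statements merged into one kernel-verified Lean document; each statement's English description precedes it below -/
import Mathlib

section
/- Fix s ≤ 1 with s ≠ 0, data x_1, …, x_n ∈ ℝ^p, and a current centroid configuration Θ_m = (θ_{m,1}, …, θ_{m,k}) with d_φ(x_i, θ_{m,j}) > 0 for all i, j. Define weights w_{m,ij} = (1/k) d_φ(x_i, θ_{m,j})^{s−1} / ((1/k) Σ_{l=1}^k d_φ(x_i, θ_{m,l})^s)^{1 − 1/s}. Then for every Θ = (θ_1, …, θ_k) with d_φ(x_i, θ_j) > 0 for all i, j, the majorization inequality holds: f_s(Θ) ≤ f_s(Θ_m) − Σ_{i=1}^n Σ_{j=1}^k w_{m,ij} d_φ(x_i, θ_{m,j}) + Σ_{i=1}^n Σ_{j=1}^k w_{m,ij} d_φ(x_i, θ_j), with equality when Θ = Θ_m. -/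
open MeasureTheory RealInnerProductSpace BigOperators

noncomputable section

/-- The Bregman divergence generated by a differentiable convex function `φ`. -/
def breg {p : ℕ} (φ : EuclideanSpace ℝ (Fin p) → ℝ)
    (x y : EuclideanSpace ℝ (Fin p)) : ℝ :=
  φ x - φ y - ⟪gradient φ y, x - y⟫

/-- The power mean `M_s(y) = ((1/k) Σ_j y_j^s)^(1/s)` (real exponents). -/
def powMean (s : ℝ) {k : ℕ} (y : Fin k → ℝ) : ℝ :=
  ((k : ℝ)⁻¹ * ∑ j, y j ^ s) ^ (1 / s)

/-- The Bregman power `k`-means objective. -/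
def objf {p : ℕ} (φ : EuclideanSpace ℝ (Fin p) → ℝ) (s : ℝ) {n k : ℕ}
    (x : Fin n → EuclideanSpace ℝ (Fin p))
    (Θ : Fin k → EuclideanSpace ℝ (Fin p)) : ℝ :=
  ∑ i, powMean s (fun j => breg φ (x i) (Θ j))

/-- The MM weights
`w_{m,ij} = (1/k) d_φ(x_i, θ_{m,j})^{s−1} / ((1/k) Σ_l d_φ(x_i, θ_{m,l})^s)^{1−1/s}`. -/
def bregWeight {p : ℕ} (φ : EuclideanSpace ℝ (Fin p) → ℝ) (s : ℝ) {n k : ℕ}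
    (x : Fin n → EuclideanSpace ℝ (Fin p))
    (Θm : Fin k → EuclideanSpace ℝ (Fin p)) (i : Fin n) (j : Fin k) : ℝ :=
  ((k : ℝ)⁻¹ * breg φ (x i) (Θm j) ^ (s - 1)) /
    (((k : ℝ)⁻¹ * ∑ l, breg φ (x i) (Θm l) ^ s) ^ (1 - 1 / s))

/-
The power mean `M_s` is positively 1-homogeneous and concave, so it lies below each of its
tangent hyperplanes, and these pass through the origin: `M_s(y) ≤ ∑_j w_j y_j` where
`w = ∇M_s(u)`, with equality at `y = u` (Euler's identity). To prove the tangent inequality,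
rescale `y` so that `∑ y_j^s = ∑ u_j^s`; then it follows by summing the scalar tangent
inequalities `(y^s - u^s)/s ≤ u^(s-1) (y - u)` of `t ↦ t^s / s`, which is concave for `s ≤ 1`.
The majorization is this inequality at `u_j = d_φ(x_i, θ_{m,j})`, `y_j = d_φ(x_i, θ_j)`,
summed over the data points `x_i`.
-/

open Finset

lemma rpow_sub_one_div_le_sub_one {s t : ℝ} (hs : s ≤ 1) (hs0 : s ≠ 0) (ht : 0 < t) :
    (t ^ s - 1) / s ≤ t - 1 := by
  rcases hs0.lt_or_gt with hneg | hpos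
  · rw [div_le_iff_of_neg hneg]
    calc (t - 1) * s ≤ s * Real.log t := by nlinarith [Real.log_le_sub_one_of_pos ht]
      _ ≤ t ^ s - 1 := by
        rw [Real.rpow_def_of_pos ht, mul_comm s]
        linarith [Real.add_one_le_exp (Real.log t * s)]
  · rw [div_le_iff₀ hpos]
    have bernoulli := rpow_one_add_le_one_add_mul_self (s := t - 1) (by linarith) hpos.le hs
    rw [add_sub_cancel] at bernoulli
    linarith

lemma rpow_sub_rpow_div_le {s u y : ℝ} (hs : s ≤ 1) (hs0 : s ≠ 0) (hu : 0 < u) (hy : 0 < y) :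
    (y ^ s - u ^ s) / s ≤ u ^ (s - 1) * (y - u) := by
  have key := rpow_sub_one_div_le_sub_one hs hs0 (div_pos hy hu)
  rw [Real.div_rpow hy.le hu.le] at key
  have hus : 0 < u ^ s := Real.rpow_pos_of_pos hu s
  calc (y ^ s - u ^ s) / s = u ^ s * ((y ^ s / u ^ s - 1) / s) := by field_simp
    _ ≤ u ^ s * (y / u - 1) := mul_le_mul_of_nonneg_left key hus.le
    _ = u ^ (s - 1) * (y - u) := by rw [Real.rpow_sub_one hu.ne']; field_simp

lemma sum_rpow_pos {ι : Type*} [Fintype ι] [Nonempty ι] {u : ι → ℝ} (hu : ∀ j, 0 < u j)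
    (s : ℝ) : 0 < ∑ j, u j ^ s :=
  sum_pos (fun j _ => Real.rpow_pos_of_pos (hu j) s) univ_nonempty

lemma powMean_const_mul {s c : ℝ} (hs0 : s ≠ 0) (hc : 0 < c) {k : ℕ} {y : Fin k → ℝ}
    (hy : ∀ j, 0 ≤ y j) : powMean s (fun j => c * y j) = c * powMean s y := by
  simp only [powMean, Real.mul_rpow hc.le (hy _), ← mul_sum, mul_left_comm _ (c ^ s)]
  have hmean : 0 ≤ (k : ℝ)⁻¹ * ∑ j, y j ^ s :=
    mul_nonneg (by positivity) (sum_nonneg fun j _ => Real.rpow_nonneg (hy j) s)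
  rw [Real.mul_rpow (by positivity) hmean, ← Real.rpow_mul hc.le,
    mul_one_div_cancel hs0, Real.rpow_one]

/-- The gradient of `powMean s` at `u`. -/
def powMeanWeight (s : ℝ) {k : ℕ} (u : Fin k → ℝ) (j : Fin k) : ℝ :=
  ((k : ℝ)⁻¹ * u j ^ (s - 1)) / (((k : ℝ)⁻¹ * ∑ l, u l ^ s) ^ (1 - 1 / s))

section PowMeanWeight

variable {s : ℝ} {k : ℕ} {u y : Fin k → ℝ}

lemma sum_powMeanWeight_mul_self (hs0 : s ≠ 0) (hu : ∀ j, 0 < u j) :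
    ∑ j, powMeanWeight s u j * u j = powMean s u := by
  rcases isEmpty_or_nonempty (Fin k) with hk | hk
  · simp [powMean, Real.zero_rpow (inv_ne_zero hs0)]
  have hS : 0 < (k : ℝ)⁻¹ * ∑ l, u l ^ s :=
    mul_pos (by simpa using Fin.pos_iff_nonempty.mpr hk) (sum_rpow_pos hu s)
  have hpow (j : Fin k) : u j ^ (s - 1) * u j = u j ^ s := by
    rw [← Real.rpow_add_one (hu j).ne', sub_add_cancel]
  simp only [powMeanWeight, div_mul_eq_mul_div, mul_assoc, hpow, ← sum_div, ← mul_sum]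
  rw [powMean, Real.rpow_sub hS, Real.rpow_one, div_div_cancel₀ hS.ne']

lemma powMean_le_sum_powMeanWeight_mul_of_sum_rpow_eq (hs : s ≤ 1) (hs0 : s ≠ 0)
    (hu : ∀ j, 0 < u j) (hy : ∀ j, 0 < y j) (hsum : ∑ j, y j ^ s = ∑ j, u j ^ s) :
    powMean s y ≤ ∑ j, powMeanWeight s u j * y j := by
  have tangent : 0 ≤ ∑ j, u j ^ (s - 1) * (y j - u j) :=
    calc 0 = ∑ j, (y j ^ s - u j ^ s) / s := by
          rw [← sum_div, sum_sub_distrib, hsum, sub_self, zero_div]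
      _ ≤ _ := sum_le_sum fun j _ => rpow_sub_rpow_div_le hs hs0 (hu j) (hy j)
  have hscale : 0 ≤ (k : ℝ)⁻¹ / ((k : ℝ)⁻¹ * ∑ l, u l ^ s) ^ (1 - 1 / s) :=
    div_nonneg (by positivity) (Real.rpow_nonneg
      (mul_nonneg (by positivity) (sum_nonneg fun l _ => Real.rpow_nonneg (hu l).le s)) _)
  have hpm : powMean s y = powMean s u := by rw [powMean, powMean, hsum]
  rw [hpm, ← sum_powMeanWeight_mul_self hs0 hu, ← sub_nonneg, ← sum_sub_distrib]
  refine (mul_nonneg hscale tangent).trans_eq ?_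
  rw [mul_sum]
  refine sum_congr rfl fun j _ => ?_
  rw [powMeanWeight]
  ring

lemma powMean_le_sum_powMeanWeight_mul (hs : s ≤ 1) (hs0 : s ≠ 0)
    (hu : ∀ j, 0 < u j) (hy : ∀ j, 0 < y j) :
    powMean s y ≤ ∑ j, powMeanWeight s u j * y j := by
  rcases isEmpty_or_nonempty (Fin k) with _ | _
  · simp [powMean, Real.zero_rpow (inv_ne_zero hs0)]
  have hU := sum_rpow_pos hu s
  have hY := sum_rpow_pos hy s
  set c := ((∑ j, u j ^ s) / ∑ j, y j ^ s) ^ (1 / s) with hc_def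
  have hc : 0 < c := by positivity
  have hcy : ∑ j, (c * y j) ^ s = ∑ j, u j ^ s := by
    simp only [Real.mul_rpow hc.le (hy _).le, ← mul_sum]
    rw [hc_def, ← Real.rpow_mul (by positivity), one_div_mul_cancel hs0, Real.rpow_one,
      div_mul_cancel₀ _ hY.ne']
  have rescaled := powMean_le_sum_powMeanWeight_mul_of_sum_rpow_eq hs hs0 hu
    (fun j => mul_pos hc (hy j)) hcy
  simp only [powMean_const_mul hs0 hc fun j => (hy j).le, mul_left_comm _ c, ← mul_sum]
    at rescaled
  exact le_of_mul_le_mul_left rescaled hc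

end PowMeanWeight

theorem mm_majorization_general {p : ℕ}
    (φ : EuclideanSpace ℝ (Fin p) → ℝ)
    (s : ℝ) (hs : s ≤ 1) (hs0 : s ≠ 0)
    {n k : ℕ} (x : Fin n → EuclideanSpace ℝ (Fin p))
    (Θm : Fin k → EuclideanSpace ℝ (Fin p))
    (hpos : ∀ i j, 0 < breg φ (x i) (Θm j))
    (Θ : Fin k → EuclideanSpace ℝ (Fin p))
    (hpos' : ∀ i j, 0 < breg φ (x i) (Θ j)) :
    objf φ s x Θ ≤ objf φ s x Θm
        - (∑ i, ∑ j, bregWeight φ s x Θm i j * breg φ (x i) (Θm j))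
        + ∑ i, ∑ j, bregWeight φ s x Θm i j * breg φ (x i) (Θ j)
    ∧ objf φ s x Θm = objf φ s x Θm
        - (∑ i, ∑ j, bregWeight φ s x Θm i j * breg φ (x i) (Θm j))
        + ∑ i, ∑ j, bregWeight φ s x Θm i j * breg φ (x i) (Θm j) := by
  refine ⟨?_, by ring⟩
  have euler (i : Fin n) : ∑ j, bregWeight φ s x Θm i j * breg φ (x i) (Θm j)
      = powMean s (fun j => breg φ (x i) (Θm j)) :=
    sum_powMeanWeight_mul_self hs0 (hpos i)
  simp only [euler, objf, sub_self, zero_add]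
  exact sum_le_sum fun i _ => powMean_le_sum_powMeanWeight_mul hs hs0 (hpos i) (hpos' i)

/-- majorization inequality for the MM surrogate: for
`s ≤ 1`, `s ≠ 0` and any `Θ` with positive divergences,
`f_s(Θ) ≤ f_s(Θ_m) − Σ_{ij} w_{m,ij} d_φ(x_i, θ_{m,j}) + Σ_{ij} w_{m,ij} d_φ(x_i, θ_j)`,
with equality when `Θ = Θ_m`. -/
theorem mm_majorization {p : ℕ}
    (φ : EuclideanSpace ℝ (Fin p) → ℝ)
    (hdiff : Differentiable ℝ φ) (hconv : ConvexOn ℝ Set.univ φ)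
    (s : ℝ) (hs : s ≤ 1) (hs0 : s ≠ 0)
    {n k : ℕ} (x : Fin n → EuclideanSpace ℝ (Fin p))
    (Θm : Fin k → EuclideanSpace ℝ (Fin p))
    (hpos : ∀ i j, 0 < breg φ (x i) (Θm j))
    (Θ : Fin k → EuclideanSpace ℝ (Fin p))
    (hpos' : ∀ i j, 0 < breg φ (x i) (Θ j)) :
    objf φ s x Θ ≤ objf φ s x Θm
        - (∑ i, ∑ j, bregWeight φ s x Θm i j * breg φ (x i) (Θm j))
        + ∑ i, ∑ j, bregWeight φ s x Θm i j * breg φ (x i) (Θ j)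
    ∧ objf φ s x Θm = objf φ s x Θm
        - (∑ i, ∑ j, bregWeight φ s x Θm i j * breg φ (x i) (Θm j))
        + ∑ i, ∑ j, bregWeight φ s x Θm i j * breg φ (x i) (Θm j) :=
  mm_majorization_general φ s hs hs0 x Θm hpos Θ hpos'
end
end

section
/- Let φ: ℝ^p → ℝ be a strictly convex differentiable function, let x_1, …, x_n ∈ ℝ^p, and let w_1, …, w_n ≥ 0 with Σ_{i=1}^n w_i > 0. Then the weighted average θ̄ = (Σ_{i=1}^n w_i x_i) / (Σ_{i=1}^n w_i) is the unique minimizer over θ ∈ ℝ^p of the map θ ↦ Σ_{i=1}^n w_i d_φ(x_i, θ). -/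
open MeasureTheory RealInnerProductSpace BigOperators

noncomputable section

lemma inner_gradient_eq {p : ℕ} (φ : EuclideanSpace ℝ (Fin p) → ℝ)
    (y v : EuclideanSpace ℝ (Fin p)) :
    ⟪gradient φ y, v⟫ = fderiv ℝ φ y v := by
  rw [gradient, InnerProductSpace.toDual_symm_apply]

lemma breg_pos {p : ℕ} {φ : EuclideanSpace ℝ (Fin p) → ℝ}
    (hdiff : Differentiable ℝ φ) (hconv : StrictConvexOn ℝ Set.univ φ)
    {x y : EuclideanSpace ℝ (Fin p)} (hxy : x ≠ y) : 0 < breg φ x y := by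
  set g : ℝ → ℝ := fun t => φ (y + t • (x - y)) with hg
  have hxysub : x - y ≠ 0 := sub_ne_zero.2 hxy
  have hgsc : StrictConvexOn ℝ Set.univ g := by
    refine ⟨convex_univ, ?_⟩
    intro s _ t _ hst a b ha hb hab
    have hne : y + s • (x - y) ≠ y + t • (x - y) := by
      intro h
      apply hst
      have h2 : s • (x - y) = t • (x - y) := add_left_cancel h
      have h3 : (s - t) • (x - y) = 0 := by rw [sub_smul, h2, sub_self]
      rcases smul_eq_zero.1 h3 with h4 | h4
      · exact sub_eq_zero.1 h4
      · exact absurd h4 hxysub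
    have key := hconv.2 (Set.mem_univ (y + s • (x - y))) (Set.mem_univ (y + t • (x - y))) hne ha hb hab
    have harg : a • (y + s • (x - y)) + b • (y + t • (x - y))
        = y + (a * s + b * t) • (x - y) := by
      have h5 : a • (y + s • (x - y)) + b • (y + t • (x - y))
          = (a + b) • y + (a * s + b * t) • (x - y) := by
        rw [smul_add, smul_add, smul_smul, smul_smul, add_smul, add_smul]
        abel
      rw [h5, hab, one_smul]
    rw [harg] at key
    simpa [hg, smul_eq_mul] using key
  have hderiv : HasDerivAt g ⟪gradient φ y, x - y⟫ 0 := by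
    have hc : HasDerivAt (fun t : ℝ => y + t • (x - y)) (x - y) 0 := by
      simpa using ((hasDerivAt_id (0:ℝ)).smul_const (x - y)).const_add y
    have hf : HasFDerivAt φ (fderiv ℝ φ y) (y + (0:ℝ) • (x - y)) := by
      simpa using (hdiff y).hasFDerivAt
    rw [inner_gradient_eq]
    exact hf.comp_hasDerivAt (0:ℝ) hc
  have hlt := hgsc.lt_slope_of_hasDerivAt (Set.mem_univ (0:ℝ)) (Set.mem_univ (1:ℝ))
    one_pos hderiv
  rw [slope_def_field] at hlt
  have hg0 : g 0 = φ y := by simp [hg]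
  have hg1 : g 1 = φ x := by simp [hg]
  rw [hg0, hg1] at hlt
  simp only [breg]
  have h6 : ⟪gradient φ y, x - y⟫ < φ x - φ y := by
    rw [sub_zero, div_one] at hlt
    exact hlt
  linarith

lemma breg_nonneg {p : ℕ} {φ : EuclideanSpace ℝ (Fin p) → ℝ}
    (hdiff : Differentiable ℝ φ) (hconv : StrictConvexOn ℝ Set.univ φ)
    (x y : EuclideanSpace ℝ (Fin p)) : 0 ≤ breg φ x y := by
  rcases eq_or_ne x y with rfl | h
  · simp [breg]
  · exact (breg_pos hdiff hconv h).le

/-- the weighted mean uniquely minimizes the weighted Bregman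
objective: for strictly convex differentiable `φ`, nonnegative weights with
positive sum, the weighted average `θ̄ = (Σ_i w_i x_i)/(Σ_i w_i)` is the unique
minimizer of `θ ↦ Σ_i w_i d_φ(x_i, θ)`. -/
theorem weighted_bregman_mean_unique_minimizer {p : ℕ}
    (φ : EuclideanSpace ℝ (Fin p) → ℝ)
    (hdiff : Differentiable ℝ φ) (hconv : StrictConvexOn ℝ Set.univ φ)
    {n : ℕ} (x : Fin n → EuclideanSpace ℝ (Fin p))
    (w : Fin n → ℝ) (hw : ∀ i, 0 ≤ w i) (hsum : 0 < ∑ i, w i) :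
    (∀ θ : EuclideanSpace ℝ (Fin p),
      ∑ i, w i * breg φ (x i) ((∑ i, w i)⁻¹ • ∑ i, w i • x i)
        ≤ ∑ i, w i * breg φ (x i) θ)
    ∧ ∀ θ : EuclideanSpace ℝ (Fin p),
        θ ≠ (∑ i, w i)⁻¹ • ∑ i, w i • x i →
        ∑ i, w i * breg φ (x i) ((∑ i, w i)⁻¹ • ∑ i, w i • x i)
          < ∑ i, w i * breg φ (x i) θ := by
  set W := ∑ i, w i with hW
  set m := W⁻¹ • ∑ i, w i • x i with hm
  have hWne : W ≠ 0 := ne_of_gt hsum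
  have hWm : ∑ i, w i • x i = W • m := by
    rw [hm, smul_inv_smul₀ hWne]
  have hexp : ∀ θ : EuclideanSpace ℝ (Fin p),
      ∑ i, w i * breg φ (x i) θ
        = ∑ i, w i * φ (x i) - W * φ θ - W * ⟪gradient φ θ, m - θ⟫ := by
    intro θ
    have h1 : ∀ i, w i * breg φ (x i) θ
        = w i * φ (x i) - w i * φ θ - ⟪gradient φ θ, w i • (x i - θ)⟫ := by
      intro i
      rw [breg, real_inner_smul_right]
      ring
    rw [Finset.sum_congr rfl fun i _ => h1 i, Finset.sum_sub_distrib,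
      Finset.sum_sub_distrib, ← inner_sum]
    have h2 : ∑ i, w i • (x i - θ) = W • (m - θ) := by
      simp only [smul_sub, Finset.sum_sub_distrib, hWm, ← Finset.sum_smul, ← hW]
    rw [h2, real_inner_smul_right, ← Finset.sum_mul, ← hW]
  have hkey : ∀ θ : EuclideanSpace ℝ (Fin p),
      ∑ i, w i * breg φ (x i) θ
        = ∑ i, w i * breg φ (x i) m + W * breg φ m θ := by
    intro θ
    rw [hexp θ, hexp m]
    simp only [breg, sub_self, inner_zero_right]
    ring
  constructor
  · intro θ
    rw [hkey θ]
    nlinarith [breg_nonneg hdiff hconv m θ]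
  · intro θ hθ
    rw [hkey θ]
    nlinarith [breg_pos hdiff hconv (Ne.symm hθ : m ≠ θ)]
end
end
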